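/- Let n ≥ 2, let μ be the Lebesgue (volume) measure on the n-dimensional Euclidean space E = ℝⁿ, and let p, q ≥ 1, C > 0. Suppose that for every Lipschitz function f : E → ℝ with compact support, (∫|f|^p dμ)^{1/p} ≤ C · (∫‖Df(x)‖^q dμ(x))^{1/q}, where Df denotes the Fréchet derivative of f (interpreted as 0 where f is not differentiable). Then for every x₀ ∈ E and every r > 0, μ(B(x₀,r))^{1/p} ≤ (C/r) · μ(closedBall(x₀, 2r))^{1/q}. -/

import Mathlib

/-!
Test the Sobolev inequality on the cutoff `x ↦ max 0 (min 1 (2 - dist x x₀ / r))`. It equals `1` on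
`B(x₀, r)`, so its `L^p` norm is at least `μ(B(x₀, r))^(1/p)`; it is `1/r`-Lipschitz and vanishes
off the closed set `closedBall x₀ (2r)`, hence so does its derivative, whose norm is at most `1/r`,
and the `L^q` norm of the derivative is at most `μ(closedBall x₀ (2r))^(1/q) / r`.
-/

open Metric MeasureTheory Function
open scoped NNReal ENNReal

section Cutoff

variable {X : Type*} [PseudoMetricSpace X]

noncomputable def ballCutoff (x₀ : X) (r : ℝ) (x : X) : ℝ :=
  max 0 (min 1 (2 - dist x x₀ / r))

variable (x₀ : X) {r : ℝ}

lemma ballCutoff_eq_one (hr : 0 < r) {x : X} (hx : x ∈ ball x₀ r) : ballCutoff x₀ r x = 1 := by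
  have : dist x x₀ / r < 1 := (div_lt_one hr).2 hx
  simp only [ballCutoff, min_eq_left (by linarith : (1 : ℝ) ≤ 2 - dist x x₀ / r)]
  exact max_eq_right zero_le_one

lemma ballCutoff_eq_zero (hr : 0 < r) {x : X} (hx : x ∉ closedBall x₀ (2 * r)) :
    ballCutoff x₀ r x = 0 := by
  rw [mem_closedBall, not_le, ← lt_div_iff₀ hr] at hx
  exact max_eq_left ((min_le_right _ _).trans (by linarith))

lemma support_ballCutoff_subset (hr : 0 < r) : support (ballCutoff x₀ r) ⊆ closedBall x₀ (2 * r) :=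
  fun _ hx ↦ by_contra fun h ↦ hx (ballCutoff_eq_zero x₀ hr h)

lemma lipschitzWith_ballCutoff (hr : 0 < r) :
    LipschitzWith (Real.toNNReal r⁻¹) (ballCutoff x₀ r) := by
  have hinner : LipschitzWith (Real.toNNReal r⁻¹) fun x ↦ 2 - dist x x₀ / r := by
    refine LipschitzWith.of_dist_le_mul fun x y ↦ ?_
    rw [Real.coe_toNNReal _ (inv_nonneg.2 hr.le), Real.dist_eq, sub_sub_sub_cancel_left, ← sub_div,
      abs_div, abs_of_pos hr, div_eq_inv_mul]
    gcongr
    exact abs_dist_sub_le y x x₀ |>.trans_eq (dist_comm y x)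
  exact (hinner.const_min 1).const_max 0

lemma hasCompactSupport_ballCutoff [ProperSpace X] (hr : 0 < r) :
    HasCompactSupport (ballCutoff x₀ r) :=
  HasCompactSupport.intro' (isCompact_closedBall x₀ (2 * r)) isClosed_closedBall
    fun _ hx ↦ ballCutoff_eq_zero x₀ hr hx

end Cutoff

lemma integral_norm_fderiv_rpow_le {E F : Type*} [NormedAddCommGroup E] [NormedSpace ℝ E]
    [MeasurableSpace E] [NormedAddCommGroup F] [NormedSpace ℝ F] (μ : Measure E) {f : E → F}
    {K : ℝ≥0} (hf : LipschitzWith K f) {s : Set E} (hs : IsClosed s) (hfs : support f ⊆ s)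
    (hμs : μ s ≠ ∞) {q : ℝ} (hq : 0 < q) :
    ∫ x, ‖fderiv ℝ f x‖ ^ q ∂μ ≤ μ.real s * K ^ q := by
  have hvanish : ∀ x ∉ s, ‖fderiv ℝ f x‖ ^ q = 0 := fun x hx ↦ by
    rw [notMem_support.1 fun h ↦ hx (closure_minimal hfs hs (support_fderiv_subset ℝ h)),
      norm_zero, Real.zero_rpow hq.ne']
  calc ∫ x, ‖fderiv ℝ f x‖ ^ q ∂μ = ∫ x in s, ‖fderiv ℝ f x‖ ^ q ∂μ :=
        (setIntegral_eq_integral_of_forall_compl_eq_zero hvanish).symm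
    _ ≤ ∫ _ in s, (K : ℝ) ^ q ∂μ :=
        integral_mono_of_nonneg (ae_of_all _ fun _ ↦ by positivity) (integrableOn_const hμs)
          (ae_of_all _ fun _ ↦ Real.rpow_le_rpow (norm_nonneg _)
            (norm_fderiv_le_of_lipschitz ℝ hf) hq.le)
    _ = μ.real s * K ^ q := by rw [setIntegral_const, smul_eq_mul]

lemma measureReal_le_integral_abs_rpow {X : Type*} [MeasurableSpace X] (μ : Measure X)
    {f : X → ℝ} {p : ℝ} (hf : Integrable (fun x ↦ |f x| ^ p) μ) {s : Set X} (hs : MeasurableSet s)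
    (hfs : ∀ x ∈ s, f x = 1) : μ.real s ≤ ∫ x, |f x| ^ p ∂μ :=
  calc μ.real s = ∫ x in s, |f x| ^ p ∂μ := by
        rw [setIntegral_congr_fun (g := fun _ ↦ (1 : ℝ)) hs
            fun x hx ↦ by simp only [hfs x hx, abs_one, Real.one_rpow],
          setIntegral_const, smul_eq_mul, mul_one]
    _ ≤ ∫ x, |f x| ^ p ∂μ := setIntegral_le_integral hf (ae_of_all _ fun _ ↦ by positivity)

lemma Continuous.integrable_abs_rpow_of_hasCompactSupport {X : Type*} [TopologicalSpace X]
    [MeasurableSpace X] [OpensMeasurableSpace X] {μ : Measure X} [IsFiniteMeasureOnCompacts μ]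
    {f : X → ℝ} (hf : Continuous f) (hfc : HasCompactSupport f) {p : ℝ} (hp : 0 < p) :
    Integrable (fun x ↦ |f x| ^ p) μ :=
  (hf.abs.rpow_const fun _ ↦ Or.inr hp.le).integrable_of_hasCompactSupport
    (hfc.comp_left (g := fun t ↦ |t| ^ p) (by simp [Real.zero_rpow hp.ne']))

theorem measureReal_ball_rpow_le_of_sobolev {E : Type*} [NormedAddCommGroup E] [NormedSpace ℝ E]
    [ProperSpace E] [MeasurableSpace E] [BorelSpace E] (μ : Measure E) [IsFiniteMeasureOnCompacts μ]
    {p q C : ℝ} (hp : 0 < p) (hq : 0 < q) (hC : 0 ≤ C)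
    (hSob : ∀ f : E → ℝ, (∃ K : ℝ≥0, LipschitzWith K f) → HasCompactSupport f →
      (∫ x, |f x| ^ p ∂μ) ^ (1 / p) ≤ C * (∫ x, ‖fderiv ℝ f x‖ ^ q ∂μ) ^ (1 / q))
    (x₀ : E) {r : ℝ} (hr : 0 < r) :
    μ.real (ball x₀ r) ^ (1 / p) ≤ C / r * μ.real (closedBall x₀ (2 * r)) ^ (1 / q) := by
  set f := ballCutoff x₀ r
  have hlip := lipschitzWith_ballCutoff x₀ hr
  have hsupp := hasCompactSupport_ballCutoff x₀ hr
  have hlower : μ.real (ball x₀ r) ≤ ∫ x, |f x| ^ p ∂μ :=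
    measureReal_le_integral_abs_rpow μ (hlip.continuous.integrable_abs_rpow_of_hasCompactSupport
      hsupp hp) measurableSet_ball fun _ ↦ ballCutoff_eq_one x₀ hr
  have hupper : ∫ x, ‖fderiv ℝ f x‖ ^ q ∂μ ≤ μ.real (closedBall x₀ (2 * r)) * r⁻¹ ^ q := by
    simpa only [Real.coe_toNNReal _ (inv_nonneg.2 hr.le)] using
      integral_norm_fderiv_rpow_le μ hlip isClosed_closedBall (support_ballCutoff_subset x₀ hr)
        measure_closedBall_lt_top.ne hq
  calc μ.real (ball x₀ r) ^ (1 / p) ≤ (∫ x, |f x| ^ p ∂μ) ^ (1 / p) := by gcongr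
    _ ≤ C * (∫ x, ‖fderiv ℝ f x‖ ^ q ∂μ) ^ (1 / q) := hSob f ⟨_, hlip⟩ hsupp
    _ ≤ C * (μ.real (closedBall x₀ (2 * r)) * r⁻¹ ^ q) ^ (1 / q) := by gcongr
    _ = C / r * μ.real (closedBall x₀ (2 * r)) ^ (1 / q) := by
        rw [Real.mul_rpow measureReal_nonneg (by positivity), one_div q,
          Real.rpow_rpow_inv (inv_nonneg.2 hr.le) hq.ne', div_eq_mul_inv]
        ring

theorem stmt_9_general (n : ℕ) (p q C : ℝ)
    (hp : 1 ≤ p) (hq : 1 ≤ q) (hC : 0 < C)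
    (hSob : ∀ f : EuclideanSpace ℝ (Fin n) → ℝ, (∃ K : NNReal, LipschitzWith K f) →
      HasCompactSupport f →
      (∫ x, |f x| ^ p ∂(volume : Measure (EuclideanSpace ℝ (Fin n)))) ^ (1 / p) ≤
        C * (∫ x, ‖fderiv ℝ f x‖ ^ q ∂(volume : Measure (EuclideanSpace ℝ (Fin n)))) ^ (1 / q)) :
    ∀ (x₀ : EuclideanSpace ℝ (Fin n)) (r : ℝ), 0 < r →
      (volume (ball x₀ r)).toReal ^ (1 / p) ≤
        (C / r) * (volume (closedBall x₀ (2 * r))).toReal ^ (1 / q) :=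
  fun x₀ _ hr ↦
    measureReal_ball_rpow_le_of_sobolev volume (by linarith) (by linarith) hC.le hSob x₀ hr

/-- Ball-inequality derivation step in the proof of Theorem 1.2, on Euclidean space. -/
theorem stmt_9 (n : ℕ) (hn : 2 ≤ n) (p q C : ℝ)
    (hp : 1 ≤ p) (hq : 1 ≤ q) (hC : 0 < C)
    (hSob : ∀ f : EuclideanSpace ℝ (Fin n) → ℝ, (∃ K : NNReal, LipschitzWith K f) →
      HasCompactSupport f →
      (∫ x, |f x| ^ p ∂(volume : Measure (EuclideanSpace ℝ (Fin n)))) ^ (1 / p) ≤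
        C * (∫ x, ‖fderiv ℝ f x‖ ^ q ∂(volume : Measure (EuclideanSpace ℝ (Fin n)))) ^ (1 / q)) :
    ∀ (x₀ : EuclideanSpace ℝ (Fin n)) (r : ℝ), 0 < r →
      (volume (ball x₀ r)).toReal ^ (1 / p) ≤
        (C / r) * (volume (closedBall x₀ (2 * r))).toReal ^ (1 / q) :=
  stmt_9_general n p q C hp hq hC hSob
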